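/- Let q be an odd prime power, G the Heisenberg group over F_q, Z = Z(G) its center, and K ≤ Aut(G) the cyclic group of order q² − 1 given by the maps φ(M) for M ∈ M(ε) (ε a nonsquare). Then K acts semiregularly on G∖Z, and for every K-orbit X ⊆ G∖Z the set X ∪ {e} is a transversal for Z in G; in particular |X| = q² − 1. -/

import Mathlib

/-- The Heisenberg group of dimension 3 over a field `F`, with coordinates `(x, y, z)`
corresponding to the unitriangular matrix `[[1,x,z],[0,1,y],[0,0,1]]`. -/
def Heis (F : Type*) := F × F × F

namespace Heis
variable {F : Type*} [Field F]

instance : Mul (Heis F) :=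
  ⟨fun a b => (a.1 + b.1, a.2.1 + b.2.1, a.2.2 + b.2.2 + a.1 * b.2.1)⟩
instance : One (Heis F) := ⟨((0 : F), (0 : F), (0 : F))⟩
instance : Inv (Heis F) := ⟨fun a => (-a.1, -a.2.1, -a.2.2 + a.1 * a.2.1)⟩

lemma mul_def (a b : Heis F) :
    a * b = (a.1 + b.1, a.2.1 + b.2.1, a.2.2 + b.2.2 + a.1 * b.2.1) := rfl
lemma one_def : (1 : Heis F) = ((0 : F), (0 : F), (0 : F)) := rfl
lemma inv_def (a : Heis F) : a⁻¹ = (-a.1, -a.2.1, -a.2.2 + a.1 * a.2.1) := rfl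

instance : Group (Heis F) where
  mul_assoc a b c := by
    rw [mul_def, mul_def, mul_def, mul_def]
    exact Prod.ext (by ring) (Prod.ext (by ring) (by ring))
  one_mul a := by
    rw [mul_def, one_def]
    obtain ⟨x, y, z⟩ := a
    exact Prod.ext (by simp) (Prod.ext (by simp) (by simp))
  mul_one a := by
    rw [mul_def, one_def]
    obtain ⟨x, y, z⟩ := a
    exact Prod.ext (by simp) (Prod.ext (by simp) (by simp))
  inv_mul_cancel a := by
    rw [mul_def, inv_def, one_def]
    obtain ⟨x, y, z⟩ := a
    exact Prod.ext (by simp) (Prod.ext (by simp) (by simp))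

instance [DecidableEq F] : DecidableEq (Heis F) :=
  inferInstanceAs (DecidableEq (F × F × F))

instance [Fintype F] : Fintype (Heis F) :=
  inferInstanceAs (Fintype (F × F × F))

end Heis

open Heis

/-- The cyclotomic action map `φ(M)` on the Heisenberg group, for
`M = [[α, β],[εβ, α]]`. -/
def phiFun {F : Type*} [Field F] (ε α β : F) : Heis F → Heis F := fun g =>
  (α * g.1 + ε * β * g.2.1,
   β * g.1 + α * g.2.1,
   α * β * (g.1 ^ 2 / 2 + ε * g.2.1 ^ 2 / 2) + ε * β ^ 2 * g.1 * g.2.1 +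
     (α ^ 2 - ε * β ^ 2) * g.2.2)

/-
Modulo the centre, `φ(M)` acts on `(x, y)` as multiplication by `α + β√ε` on `x + y√ε`,
and `F(√ε)` is a field because `ε` is a nonsquare. Hence for `g ∉ Z` the map
`α + β√ε ↦ φ(M)(g) Z` is a bijection from `F(√ε)ˣ` onto the nontrivial cosets of `Z`:
a fixed point forces `α + β√ε = 1`, and `e` accounts for the trivial coset.
-/

namespace Heis

variable {F : Type*} [Field F] (ε : F)

/-- The quotient map `G → G/Z`, with `G/Z ≅ F²` identified with `F(√ε) = F ⊕ F√ε`. -/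
def toQuad (g : Heis F) : QuadraticAlgebra F ε 0 := ⟨g.1, g.2.1⟩

variable {ε}

@[simp]
lemma toQuad_mul (a b : Heis F) : toQuad ε (a * b) = toQuad ε a + toQuad ε b := rfl

@[simp]
lemma toQuad_inv (a : Heis F) : toQuad ε a⁻¹ = -toQuad ε a := rfl

lemma toQuad_eq_zero_iff {g : Heis F} : toQuad ε g = 0 ↔ g.1 = 0 ∧ g.2.1 = 0 :=
  QuadraticAlgebra.ext_iff

lemma toQuad_phiFun (z : QuadraticAlgebra F ε 0) (g : Heis F) :
    toQuad ε (phiFun ε z.re z.im g) = z * toQuad ε g := by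
  ext <;> simp only [toQuad, phiFun, QuadraticAlgebra.re_mul, QuadraticAlgebra.im_mul]; ring

variable (ε) in
lemma mul_inv_coords_eq_zero_iff (a b : Heis F) :
    ((a * b⁻¹).1 = 0 ∧ (a * b⁻¹).2.1 = 0) ↔ toQuad ε a = toQuad ε b := by
  rw [← toQuad_eq_zero_iff, toQuad_mul, toQuad_inv, ← sub_eq_add_neg, sub_eq_zero]

variable (ε) in
/-- The `K`-orbit of `g`, indexing `φ(M)` by `α + β√ε ∈ F(√ε)ˣ`. -/
def phiOrbit (g : Heis F) : Set (Heis F) :=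
  (fun z : QuadraticAlgebra F ε 0 => phiFun ε z.re z.im g) '' {0}ᶜ

lemma mem_phiOrbit_iff {g x : Heis F} :
    x ∈ phiOrbit ε g ↔ ∃ α β : F, (α, β) ≠ (0, 0) ∧ x = phiFun ε α β g := by
  constructor
  · rintro ⟨z, hz, rfl⟩
    exact ⟨z.re, z.im, by simpa [QuadraticAlgebra.ext_iff] using hz, rfl⟩
  · rintro ⟨α, β, h, rfl⟩
    exact ⟨⟨α, β⟩, by simpa [QuadraticAlgebra.ext_iff] using h, rfl⟩

variable [Fact (∀ r : F, r ^ 2 ≠ ε + 0 * r)] {g : Heis F}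

lemma eq_one_of_phiFun_eq_self {z : QuadraticAlgebra F ε 0} (hg : toQuad ε g ≠ 0)
    (hfix : phiFun ε z.re z.im g = g) : z = 1 := by
  rw [← mul_eq_right₀ hg, ← toQuad_phiFun, hfix]

lemma phiFun_injective (hg : toQuad ε g ≠ 0) :
    Function.Injective fun z : QuadraticAlgebra F ε 0 => phiFun ε z.re z.im g :=
  fun z w h => mul_right_cancel₀ hg (by simpa only [toQuad_phiFun] using congrArg (toQuad ε) h)

lemma existsUnique_toQuad_eq (hg : toQuad ε g ≠ 0) (h : Heis F) :
    ∃! x : Heis F, (x = 1 ∨ x ∈ phiOrbit ε g) ∧ toQuad ε x = toQuad ε h := by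
  by_cases h0 : toQuad ε h = 0
  · refine ⟨1, ⟨.inl rfl, h0.symm⟩, ?_⟩
    rintro x ⟨rfl | ⟨z, hz, rfl⟩, hx⟩
    · rfl
    · rw [toQuad_phiFun, h0] at hx
      exact absurd hx (mul_ne_zero hz hg)
  · refine ⟨phiFun ε (toQuad ε h / toQuad ε g).re (toQuad ε h / toQuad ε g).im g,
      ⟨.inr ⟨_, div_ne_zero h0 hg, rfl⟩, by rw [toQuad_phiFun, div_mul_cancel₀ _ hg]⟩, ?_⟩
    rintro x ⟨rfl | ⟨z, -, rfl⟩, hx⟩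
    · exact absurd hx.symm h0
    · rw [toQuad_phiFun, ← eq_div_iff hg] at hx
      rw [hx]

lemma ncard_phiOrbit [Finite F] (hg : toQuad ε g ≠ 0) :
    (phiOrbit ε g).ncard = Nat.card F ^ 2 - 1 := by
  have : Finite (QuadraticAlgebra F ε 0) := .of_equiv _ (QuadraticAlgebra.equivProd ε 0).symm
  rw [phiOrbit, Set.ncard_image_of_injective _ (phiFun_injective hg), Set.ncard_compl,
    Set.ncard_singleton, Nat.card_congr (QuadraticAlgebra.equivProd ε 0), Nat.card_prod, sq]

end Heis

theorem stmt12_general {F : Type*} [Field F] [Fintype F] (q : ℕ) (hq : Fintype.card F = q)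
    (ε : F) (hε : ∀ γ : F, γ ^ 2 ≠ ε) :
    (∀ α β : F, (α, β) ≠ (0, 0) → ∀ g : Heis F, ¬(g.1 = 0 ∧ g.2.1 = 0) →
      phiFun ε α β g = g → (α, β) = (1, 0)) ∧
    (∀ g : Heis F, ¬(g.1 = 0 ∧ g.2.1 = 0) →
      (∀ h : Heis F, ∃! x : Heis F,
        (x = 1 ∨ ∃ α β : F, (α, β) ≠ (0, 0) ∧ x = phiFun ε α β g) ∧
          (x * h⁻¹).1 = 0 ∧ (x * h⁻¹).2.1 = 0) ∧
      {h : Heis F | ∃ α β : F, (α, β) ≠ (0, 0) ∧ h = phiFun ε α β g}.ncard = q ^ 2 - 1) := by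
  have : Fact (∀ r : F, r ^ 2 ≠ ε + 0 * r) := ⟨by simpa using hε⟩
  simp only [← mem_phiOrbit_iff, mul_inv_coords_eq_zero_iff ε, Set.ofPred_mem_eq,
    ← toQuad_eq_zero_iff (ε := ε)]
  refine ⟨fun α β _ g hg hfix => ?_, fun g hg => ⟨existsUnique_toQuad_eq hg, ?_⟩⟩
  · simpa [QuadraticAlgebra.ext_iff, QuadraticAlgebra.re_one, QuadraticAlgebra.im_one] using
      eq_one_of_phiFun_eq_self (z := ⟨α, β⟩) hg hfix
  · rw [ncard_phiOrbit hg, Nat.card_eq_fintype_card, hq]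

/-- The group `K = {φ(M) : M ∈ M(ε)} ≤ Aut(G)` acts semiregularly on `G ∖ Z` (only the
identity fixes a point outside the center), and for every `K`-orbit `X ⊆ G ∖ Z` the set
`X ∪ {e}` is a transversal for the center `Z` in `G` (it meets every coset of `Z` exactly
once); in particular `|X| = q² − 1`. -/
theorem stmt12 {F : Type*} [Field F] [Fintype F] (q : ℕ) (hq : Fintype.card F = q)
    (hodd : Odd q) (ε : F) (hε : ∀ γ : F, γ ^ 2 ≠ ε) :
    (∀ α β : F, (α, β) ≠ (0, 0) → ∀ g : Heis F, ¬(g.1 = 0 ∧ g.2.1 = 0) →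
      phiFun ε α β g = g → (α, β) = (1, 0)) ∧
    (∀ g : Heis F, ¬(g.1 = 0 ∧ g.2.1 = 0) →
      (∀ h : Heis F, ∃! x : Heis F,
        (x = 1 ∨ ∃ α β : F, (α, β) ≠ (0, 0) ∧ x = phiFun ε α β g) ∧
          (x * h⁻¹).1 = 0 ∧ (x * h⁻¹).2.1 = 0) ∧
      {h : Heis F | ∃ α β : F, (α, β) ≠ (0, 0) ∧ h = phiFun ε α β g}.ncard = q ^ 2 - 1) :=
  stmt12_general q hq ε hε
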